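/- For a gold standard sequence y with variance σ_G² > 0 and a fixed MSE value M ≥ 0, among all error sequences d with (1/N)Σd_i² = M, the covariance σ_{XY} between x = y + d and y is maximised when d_i = √(M/σ_G²)·(y_i − μ_Y) for all i, and the maximum covariance equals σ_G² + √(σ_G²·M). -/

import Mathlib

/-!
Centre `y` at its mean: `e i = y i - μY` sums to zero, so the shift by the mean of `x` does not
affect the covariance, and `σ_{XY} = σ_G² + (1/N) ∑ d_i e_i`. By Cauchy–Schwarz the last term is
at most `√(M σ_G²)`, with equality for nonnegative multiples of `e`; the constraint on the mean
square of `d` fixes that multiple to `√(M / σ_G²)`.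
-/

open Finset

theorem Fintype.sum_sub_sum_div_card_eq_zero {ι K : Type*} [Fintype ι] [Field K] [CharZero K]
    (f : ι → K) :
    ∑ i, (f i - (∑ j, f j) / Fintype.card ι) = 0 := by
  simpa only [balance_apply, expect_eq_sum_div_card] using sum_balance f

theorem Finset.sum_sub_mul_eq_sum_mul_of_sum_eq_zero {ι R : Type*} [CommRing R]
    (s : Finset ι) (a e : ι → R) (c : R) (he : ∑ i ∈ s, e i = 0) :
    ∑ i ∈ s, (a i - c) * e i = ∑ i ∈ s, a i * e i := by
  simp [sub_mul, sum_sub_distrib, ← mul_sum, he]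

theorem Real.sum_mul_div_le_sqrt_mul {ι : Type*} (s : Finset ι) (f g : ι → ℝ) {c : ℝ}
    (hc : 0 ≤ c) :
    (∑ i ∈ s, f i * g i) / c ≤ √((∑ i ∈ s, f i ^ 2) / c * ((∑ i ∈ s, g i ^ 2) / c)) := by
  calc (∑ i ∈ s, f i * g i) / c ≤ √(∑ i ∈ s, f i ^ 2) * √(∑ i ∈ s, g i ^ 2) / c :=
        div_le_div_of_nonneg_right (Real.sum_mul_le_sqrt_mul_sqrt s f g) hc
    _ = √((∑ i ∈ s, f i ^ 2) / c * ((∑ i ∈ s, g i ^ 2) / c)) := by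
        rw [div_mul_div_comm, ← sq, Real.sqrt_div' _ (sq_nonneg c), Real.sqrt_sq hc,
          Real.sqrt_mul (sum_nonneg fun i _ ↦ sq_nonneg (f i))]

theorem Real.sqrt_div_mul_self {a b : ℝ} (ha : 0 ≤ a) (hb : 0 < b) : √(a / b) * b = √(b * a) := by
  nth_rw 2 [← Real.sqrt_sq hb.le]
  rw [← Real.sqrt_mul (div_nonneg ha hb.le)]
  congr 1
  field_simp

theorem cov_max_given_mse_general (N : ℕ) (y : Fin N → ℝ)
    (μY σG2 M : ℝ)
    (hμY : μY = (∑ i, y i) / N)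
    (hσG2 : σG2 = (∑ i, (y i - μY) ^ 2) / N)
    (hσG2pos : 0 < σG2)
    (hM : 0 ≤ M) :
    (∀ d : Fin N → ℝ, (∑ i, d i ^ 2) / N = M →
      (∑ i, ((y i + d i) - (∑ j, (y j + d j)) / N) * (y i - μY)) / N ≤
        σG2 + Real.sqrt (σG2 * M)) ∧
    (∀ d : Fin N → ℝ, (∀ i, d i = Real.sqrt (M / σG2) * (y i - μY)) →
      (∑ i, d i ^ 2) / N = M ∧
      (∑ i, ((y i + d i) - (∑ j, (y j + d j)) / N) * (y i - μY)) / N =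
        σG2 + Real.sqrt (σG2 * M)) := by
  have hcentered : ∑ i, (y i - μY) = 0 := by
    simpa only [hμY, Fintype.card_fin] using Fintype.sum_sub_sum_div_card_eq_zero y
  have hcov (d : Fin N → ℝ) :
      (∑ i, ((y i + d i) - (∑ j, (y j + d j)) / N) * (y i - μY)) / N =
        σG2 + (∑ i, d i * (y i - μY)) / N := by
    rw [sum_sub_mul_eq_sum_mul_of_sum_eq_zero _ _ _ _ hcentered, hσG2, ← add_div]
    simp only [sq, sum_sub_mul_eq_sum_mul_of_sum_eq_zero _ _ _ _ hcentered, add_mul,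
      sum_add_distrib]
  refine ⟨fun d hd ↦ ?_, fun d hd ↦ ?_⟩
  · rw [hcov]
    grw [Real.sum_mul_div_le_sqrt_mul _ _ _ (Nat.cast_nonneg N), hd, ← hσG2, mul_comm]
  · obtain rfl : d = fun i ↦ √(M / σG2) * (y i - μY) := funext hd
    constructor
    · simp only [mul_pow, ← mul_sum, mul_div_assoc, ← hσG2,
        Real.sq_sqrt (div_nonneg hM hσG2pos.le)]
      field_simp
    · rw [hcov]
      simp only [mul_assoc, ← mul_sum, mul_div_assoc, ← sq, ← hσG2,
        Real.sqrt_div_mul_self hM hσG2pos]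

theorem cov_max_given_mse (N : ℕ) (hN : 0 < N) (y : Fin N → ℝ)
    (μY σG2 M : ℝ)
    (hμY : μY = (∑ i, y i) / N)
    (hσG2 : σG2 = (∑ i, (y i - μY) ^ 2) / N)
    (hσG2pos : 0 < σG2)
    (hM : 0 ≤ M) :
    (∀ d : Fin N → ℝ, (∑ i, d i ^ 2) / N = M →
      (∑ i, ((y i + d i) - (∑ j, (y j + d j)) / N) * (y i - μY)) / N ≤
        σG2 + Real.sqrt (σG2 * M)) ∧
    (∀ d : Fin N → ℝ, (∀ i, d i = Real.sqrt (M / σG2) * (y i - μY)) →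
      (∑ i, d i ^ 2) / N = M ∧
      (∑ i, ((y i + d i) - (∑ j, (y j + d j)) / N) * (y i - μY)) / N =
        σG2 + Real.sqrt (σG2 * M)) :=
  cov_max_given_mse_general N y μY σG2 M hμY hσG2 hσG2pos hM
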